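/- Let d ≥ 1 and K ≥ 1 be integers. For each y ∈ {1,…,K} let a_y, â_y : ℝ^d → [0,∞) be measurable and Lebesgue-integrable. Let Ŷ : ℝ^d → {1,…,K} be a measurable map satisfying â_{Ŷ(x)}(x) = max_{y} â_y(x) for every x ∈ ℝ^d. Then ∫_{ℝ^d} ( max_{y} a_y(x) − a_{Ŷ(x)}(x) ) dx ≤ Σ_{y=1}^{K} ∫_{ℝ^d} |a_y(x) − â_y(x)| dx. -/
import Mathlib


open MeasureTheory Finset

lemma integrable_sup'_aux {α : Type*} [MeasurableSpace α] {μ : Measure α}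
    {ι : Type*} (s : Finset ι) (hs : s.Nonempty) (f : ι → α → ℝ)
    (hf : ∀ i, Integrable (f i) μ) :
    Integrable (fun x => s.sup' hs (fun i => f i x)) μ := by
  induction hs using Finset.Nonempty.cons_induction with
  | singleton i => simp only [Finset.sup'_singleton]; exact hf i
  | cons i s hi hs ih =>
      have he : (fun x => (Finset.cons i s hi).sup' (Finset.cons_nonempty hi)
          (fun j => f j x)) = fun x => f i x ⊔ s.sup' hs (fun j => f j x) := by
        funext x; exact Finset.sup'_cons hs (fun j => f j x)
      rw [he]
      exact (hf i).sup ih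

/-- generative regret bound for plug-in MAP: if `Ŷ(x)` maximizes
`y ↦ â_y(x)` pointwise, then `∫ (max_y a_y(x) − a_{Ŷ(x)}(x)) dx ≤ ∑_y ∫ |a_y − â_y|`. -/
theorem stmt1 (d K : ℕ) (hd : 1 ≤ d) (hK : 1 ≤ K)
    (a ahat : Fin K → (Fin d → ℝ) → ℝ)
    (ha_nonneg : ∀ y x, 0 ≤ a y x) (hahat_nonneg : ∀ y x, 0 ≤ ahat y x)
    (ha_meas : ∀ y, Measurable (a y)) (hahat_meas : ∀ y, Measurable (ahat y))
    (ha_int : ∀ y, Integrable (a y)) (hahat_int : ∀ y, Integrable (ahat y))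
    (Yhat : (Fin d → ℝ) → Fin K) (hYhat_meas : Measurable Yhat)
    (hYhat_max : ∀ x, ahat (Yhat x) x =
      Finset.univ.sup' (Finset.univ_nonempty_iff.mpr (Fin.pos_iff_nonempty.mp hK))
        (fun y => ahat y x)) :
    (∫ x, (Finset.univ.sup' (Finset.univ_nonempty_iff.mpr (Fin.pos_iff_nonempty.mp hK))
        (fun y => a y x) - a (Yhat x) x))
      ≤ ∑ y, ∫ x, |a y x - ahat y x| := by
  have hne : (Finset.univ : Finset (Fin K)).Nonempty :=
    Finset.univ_nonempty_iff.mpr (Fin.pos_iff_nonempty.mp hK)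
  -- pointwise bound
  have key : ∀ x, (Finset.univ.sup' hne (fun y => a y x) - a (Yhat x) x)
      ≤ ∑ y, |a y x - ahat y x| := by
    intro x
    obtain ⟨ys, -, hys⟩ := Finset.exists_mem_eq_sup' hne (fun y => a y x)
    rw [hys]
    by_cases hcase : ys = Yhat x
    · subst hcase
      simp only [sub_self]
      exact Finset.sum_nonneg fun y _ => abs_nonneg _
    · have h1 : a ys x - a (Yhat x) x
          ≤ |a ys x - ahat ys x| + |a (Yhat x) x - ahat (Yhat x) x| := by
        have hmax : ahat ys x ≤ ahat (Yhat x) x := by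
          rw [hYhat_max x]
          exact Finset.le_sup' (fun y => ahat y x) (Finset.mem_univ ys)
        have := abs_sub_abs_le_abs_sub (a ys x) (ahat ys x)
        have e1 := le_abs_self (a ys x - ahat ys x)
        have e2 : ahat (Yhat x) x - a (Yhat x) x
            ≤ |a (Yhat x) x - ahat (Yhat x) x| := by
          rw [abs_sub_comm]; exact le_abs_self _
        linarith
      refine h1.trans ?_
      have : |a ys x - ahat ys x| + |a (Yhat x) x - ahat (Yhat x) x|
          = ∑ y ∈ ({ys, Yhat x} : Finset (Fin K)), |a y x - ahat y x| := by
        rw [Finset.sum_pair hcase]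
      rw [this]
      exact Finset.sum_le_sum_of_subset_of_nonneg (Finset.subset_univ _)
        (fun y _ _ => abs_nonneg _)
  -- integrability of x ↦ a (Yhat x) x
  have hrepr : (fun x => a (Yhat x) x)
      = fun x => ∑ y, if Yhat x = y then a y x else 0 := by
    funext x
    simp [Finset.sum_ite_eq]
  have hmeas2 : Measurable (fun x => a (Yhat x) x) := by
    rw [hrepr]
    refine Finset.measurable_sum _ fun y _ => ?_
    exact Measurable.ite (hYhat_meas (MeasurableSet.singleton y)) (ha_meas y)
      measurable_const
  have hint2 : Integrable (fun x => a (Yhat x) x) := by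
    rw [hrepr]
    refine integrable_finset_sum _ fun y _ => ?_
    refine (ha_int y).mono' ?_ ?_
    · exact (Measurable.ite (hYhat_meas (MeasurableSet.singleton y)) (ha_meas y)
        measurable_const).aestronglyMeasurable
    · refine Filter.Eventually.of_forall fun x => ?_
      by_cases h : Yhat x = y <;>
        simp [h, abs_of_nonneg (ha_nonneg y x), ha_nonneg y x]
  have hintL : Integrable (fun x =>
      Finset.univ.sup' hne (fun y => a y x) - a (Yhat x) x) :=
    (integrable_sup'_aux _ hne a ha_int).sub hint2
  have hintR : Integrable (fun x => ∑ y, |a y x - ahat y x|) :=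
    integrable_finset_sum _ fun y _ => ((ha_int y).sub (hahat_int y)).abs
  calc (∫ x, (Finset.univ.sup' hne (fun y => a y x) - a (Yhat x) x))
      ≤ ∫ x, ∑ y, |a y x - ahat y x| := integral_mono hintL hintR key
    _ = ∑ y, ∫ x, |a y x - ahat y x| :=
        integral_finset_sum _ fun y _ => ((ha_int y).sub (hahat_int y)).abs
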